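/- In the secure summation model with K ≥ 2 users, assume each key Z_k takes values in (ZMod q)^{L_Z}, correctness holds, and security holds against the empty colluding set. Then for every user u ∈ {1,…,K}, H(Z_u) ≥ L·log q; consequently L_Z ≥ L (i.e., the individual key rate R_Z = L_Z/L is at least 1). -/

import Mathlib

open MeasureTheory ProbabilityTheory

/-- Shannon entropy (in natural log units) of a finitely-valued random variable. -/
noncomputable def entr {Ω : Type*} [MeasurableSpace Ω] (μ : Measure Ω)
    {α : Type*} [Fintype α] [MeasurableSpace α] (X : Ω → α) : ℝ :=
  ∑ a : α, Real.negMulLog ((μ.map X) {a}).toReal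

/-- Conditional Shannon entropy `H(X | Y)`. -/
noncomputable def condEntr {Ω : Type*} [MeasurableSpace Ω] (μ : Measure Ω)
    {α β : Type*} [Fintype α] [MeasurableSpace α] [Fintype β] [MeasurableSpace β]
    (X : Ω → α) (Y : Ω → β) : ℝ :=
  entr μ (fun ω => (X ω, Y ω)) - entr μ Y

/-- Conditional mutual information `I(X ; Y | Z)`. -/
noncomputable def condMI {Ω : Type*} [MeasurableSpace Ω] (μ : Measure Ω)
    {α β γ : Type*} [Fintype α] [MeasurableSpace α] [Fintype β] [MeasurableSpace β]
    [Fintype γ] [MeasurableSpace γ] (X : Ω → α) (Y : Ω → β) (Z : Ω → γ) : ℝ :=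
  condEntr μ X Z + condEntr μ Y Z - condEntr μ (fun ω => (X ω, Y ω)) Z

/-- A random variable is uniformly distributed on a finite type. -/
def IsUnif {Ω : Type*} [MeasurableSpace Ω] (μ : Measure Ω)
    {α : Type*} [Fintype α] [MeasurableSpace α] (X : Ω → α) : Prop :=
  ∀ a : α, μ (X ⁻¹' {a}) = (Fintype.card α : ENNReal)⁻¹

/-!
Fix a user `u`, another user `j ≠ u`, and write `S = ∑ₖ W_k`. The bound comes from the chain
`L log q ≤ H(X_u) ≤ H(X_u | S) ≤ H(X_u | W_u) ≤ H(Z_u)`: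
* given the inputs of the other users and all keys, `X_u` determines `S` by correctness, hence
  `W_u`, which is uniform and independent of those data; so `H(X_u) ≥ L log q`;
* `X_u` is a function of the data of the users other than `j`, and given these `S` is still
  uniform because of `W_j`; so `X_u` and `S` are independent;
* security against the empty coalition gives `I(X_u; W_u | S) = 0`;
* `X_u` is a function of `(W_u, Z_u)`.
All entropy inequalities reduce to submodularity of Shannon entropy, which is Gibbs' inequality.
-/

open Real

lemma mul_log_add_log_sub_le {r a b c : ℝ} (hr : 0 ≤ r) (hra : r ≤ a) (hrb : r ≤ b)
    (hac : a ≤ c) : r * (log a + log b - log r - log c) ≤ a * b / c - r := by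
  obtain rfl | hr := hr.eq_or_lt
  · simp only [zero_mul, sub_zero]
    have ha := hr.trans hra
    have hb := hr.trans hrb
    have hc := ha.trans hac
    positivity
  have ha := hr.trans_le hra
  have hb := hr.trans_le hrb
  have hc := ha.trans_le hac
  have hlog : log a + log b - log r - log c = log (a * b / (r * c)) := by
    rw [log_div (by positivity) (by positivity), log_mul ha.ne' hb.ne', log_mul hr.ne' hc.ne']
    ring
  calc r * (log a + log b - log r - log c) ≤ r * (a * b / (r * c) - 1) := by
        rw [hlog]; exact mul_le_mul_of_nonneg_left (log_le_sub_one_of_pos (by positivity)) hr.le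
    _ = a * b / c - r := by field_simp

/-- Subadditivity of entropy, for unnormalised joint weights `r a b`. -/
lemma sum_sum_negMulLog_add_negMulLog_le {α β : Type*} [Fintype α] [Fintype β]
    (r : α → β → ℝ) (hr : ∀ a b, 0 ≤ r a b) :
    ∑ a, ∑ b, negMulLog (r a b) + negMulLog (∑ a, ∑ b, r a b)
      ≤ ∑ a, negMulLog (∑ b, r a b) + ∑ b, negMulLog (∑ a, r a b) := by
  set A := fun a => ∑ b, r a b
  set B := fun b => ∑ a, r a b
  set C := ∑ a, ∑ b, r a b
  have hB : ∑ b, B b = C := Finset.sum_comm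
  have gibbs : ∑ a, ∑ b, r a b * (log (A a) + log (B b) - log (r a b) - log C) ≤ 0 :=
    calc _ ≤ ∑ a, ∑ b, (A a * B b / C - r a b) := by
          gcongr with a _ b _
          refine mul_log_add_log_sub_le (hr a b) ?_ ?_ ?_
          · exact Finset.single_le_sum (fun b _ => hr a b) (Finset.mem_univ b)
          · exact Finset.single_le_sum (fun a _ => hr a b) (Finset.mem_univ a)
          · exact Finset.single_le_sum (f := A) (fun a _ => Finset.sum_nonneg fun b _ => hr a b)
              (Finset.mem_univ a)
      _ = C * C / C - C := by
          simp only [Finset.sum_sub_distrib, ← Finset.sum_div, ← Finset.mul_sum, ← Finset.sum_mul,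
            hB]
          rfl
      _ = 0 := by rw [mul_self_div_self, sub_self]
  have hA_log : ∑ a, ∑ b, r a b * log (A a) = -∑ a, negMulLog (A a) := by
    simp [negMulLog, ← Finset.sum_mul, A]
  have hB_log : ∑ a, ∑ b, r a b * log (B b) = -∑ b, negMulLog (B b) := by
    rw [Finset.sum_comm]; simp [negMulLog, ← Finset.sum_mul, B]
  have hC_log : ∑ a, ∑ b, r a b * log C = -negMulLog C := by
    simp [negMulLog, ← Finset.sum_mul, C]
  have hr_log : ∑ a, ∑ b, r a b * log (r a b) = -∑ a, ∑ b, negMulLog (r a b) := by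
    simp [negMulLog]
  simp only [mul_sub, mul_add, Finset.sum_sub_distrib, Finset.sum_add_distrib, hA_log, hB_log,
    hC_log, hr_log] at gibbs
  linarith

section Entropy

variable {Ω : Type*} [MeasurableSpace Ω] {μ : Measure Ω}
  {α β γ : Type*} [Fintype α] [MeasurableSpace α] [MeasurableSingletonClass α]
  [Fintype β] [MeasurableSpace β] [MeasurableSingletonClass β]
  [Fintype γ] [MeasurableSpace γ] [MeasurableSingletonClass γ]

lemma entr_eq_sum {X : Ω → α} (hX : Measurable X) :
    entr μ X = ∑ a, negMulLog (μ.real (X ⁻¹' {a})) := by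
  simp only [entr, Measure.map_apply hX (measurableSet_singleton _)]
  rfl

lemma entr_prod_eq_sum {X : Ω → α} {Y : Ω → β} (hX : Measurable X) (hY : Measurable Y) :
    entr μ (fun ω => (X ω, Y ω)) = ∑ a, ∑ b, negMulLog (μ.real (X ⁻¹' {a} ∩ Y ⁻¹' {b})) := by
  rw [entr_eq_sum (hX.prodMk hY), Fintype.sum_prod_type]
  simp only [← Set.singleton_prod_singleton, Set.mk_preimage_prod]

lemma measureReal_eq_sum_inter_preimage [IsFiniteMeasure μ] {Y : Ω → β} (hY : Measurable Y)
    (s : Set Ω) : μ.real s = ∑ b, μ.real (s ∩ Y ⁻¹' {b}) := by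
  simp_rw [Set.inter_comm s, ← measureReal_restrict_apply (hY (measurableSet_singleton _))]
  rw [sum_measureReal_preimage_singleton _ fun b _ => hY (measurableSet_singleton b)]
  simp

lemma entr_comp_of_injective {X : Ω → α} (hX : Measurable X) {g : α → β}
    (hg : Function.Injective g) : entr μ (fun ω => g (X ω)) = entr μ X := by
  have hgX : Measurable fun ω => g (X ω) := Measurable.of_discrete.comp hX
  rw [entr_eq_sum hX, entr_eq_sum hgX]
  refine (Fintype.sum_of_injective g hg _ _ (fun b hb => ?_) fun a => ?_).symm
  · have : (fun ω => g (X ω)) ⁻¹' {b} = ∅ :=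
      Set.eq_empty_of_forall_notMem fun ω h => hb ⟨X ω, h⟩
    simp [this]
  · congr 2
    ext ω
    simp [hg.eq_iff]

lemma sum_measureReal_preimage_singleton_eq_one [IsProbabilityMeasure μ] {X : Ω → α}
    (hX : Measurable X) : ∑ a, μ.real (X ⁻¹' {a}) = 1 := by
  rw [sum_measureReal_preimage_singleton _ fun a _ => hX (measurableSet_singleton a)]
  simp

lemma entr_prod_add_negMulLog_le [IsFiniteMeasure μ] {X : Ω → α} {Y : Ω → β}
    (hX : Measurable X) (hY : Measurable Y) :
    entr μ (fun ω => (X ω, Y ω)) + negMulLog (μ.real Set.univ) ≤ entr μ X + entr μ Y := by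
  have hmX : ∀ a, μ.real (X ⁻¹' {a}) = ∑ b, μ.real (X ⁻¹' {a} ∩ Y ⁻¹' {b}) := fun a =>
    measureReal_eq_sum_inter_preimage hY _
  have hmY : ∀ b, μ.real (Y ⁻¹' {b}) = ∑ a, μ.real (X ⁻¹' {a} ∩ Y ⁻¹' {b}) := fun b => by
    simp_rw [measureReal_eq_sum_inter_preimage hX (Y ⁻¹' {b}), Set.inter_comm]
  have huniv : μ.real Set.univ = ∑ a, ∑ b, μ.real (X ⁻¹' {a} ∩ Y ⁻¹' {b}) := by
    simp_rw [measureReal_eq_sum_inter_preimage hX Set.univ, Set.univ_inter, hmX]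
  rw [entr_prod_eq_sum hX hY, entr_eq_sum hX, entr_eq_sum hY, huniv]
  simp_rw [hmX, hmY]
  exact sum_sum_negMulLog_add_negMulLog_le _ fun a b => measureReal_nonneg

lemma entr_prod_eq_sum_entr_restrict {X : Ω → α} {Z : Ω → γ} (hX : Measurable X)
    (hZ : Measurable Z) :
    entr μ (fun ω => (X ω, Z ω)) = ∑ c, entr (μ.restrict (Z ⁻¹' {c})) X := by
  rw [entr_prod_eq_sum hX hZ, Finset.sum_comm]
  refine Finset.sum_congr rfl fun c _ => ?_
  simp_rw [entr_eq_sum hX, measureReal_restrict_apply (hX (measurableSet_singleton _))]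

lemma entr_submodular [IsFiniteMeasure μ] {X : Ω → α} {Y : Ω → β} {Z : Ω → γ}
    (hX : Measurable X) (hY : Measurable Y) (hZ : Measurable Z) :
    entr μ (fun ω => ((X ω, Y ω), Z ω)) + entr μ Z
      ≤ entr μ (fun ω => (X ω, Z ω)) + entr μ (fun ω => (Y ω, Z ω)) := by
  rw [entr_prod_eq_sum_entr_restrict (hX.prodMk hY) hZ, entr_prod_eq_sum_entr_restrict hX hZ,
    entr_prod_eq_sum_entr_restrict hY hZ, entr_eq_sum hZ, ← Finset.sum_add_distrib,
    ← Finset.sum_add_distrib]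
  refine Finset.sum_le_sum fun c _ => ?_
  rw [← measureReal_restrict_apply_univ]
  exact entr_prod_add_negMulLog_le hX hY

lemma negMulLog_measureReal_univ_le_entr [IsFiniteMeasure μ] {X : Ω → α} (hX : Measurable X) :
    negMulLog (μ.real Set.univ) ≤ entr μ X := by
  have hdiag : entr μ (fun ω => (X ω, X ω)) = entr μ X :=
    entr_comp_of_injective hX (g := fun a => (a, a)) fun _ _ h => congrArg Prod.fst h
  linarith [entr_prod_add_negMulLog_le (μ := μ) hX hX]

lemma entr_le_entr_prod [IsFiniteMeasure μ] {X : Ω → α} {Y : Ω → β} (hX : Measurable X)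
    (hY : Measurable Y) : entr μ Y ≤ entr μ (fun ω => (X ω, Y ω)) := by
  rw [entr_prod_eq_sum_entr_restrict hX hY, entr_eq_sum hY]
  gcongr with b
  rw [← measureReal_restrict_apply_univ]
  exact negMulLog_measureReal_univ_le_entr hX

lemma entr_comp_le [IsFiniteMeasure μ] {X : Ω → α} (hX : Measurable X) (g : α → β) :
    entr μ (fun ω => g (X ω)) ≤ entr μ X :=
  calc entr μ (fun ω => g (X ω)) ≤ entr μ (fun ω => (X ω, g (X ω))) :=
        entr_le_entr_prod hX (Measurable.of_discrete.comp hX)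
    _ = entr μ X :=
        entr_comp_of_injective hX (g := fun a => (a, g a)) fun _ _ h => congrArg Prod.fst h

lemma entr_prod_le_add [IsProbabilityMeasure μ] {X : Ω → α} {Y : Ω → β} (hX : Measurable X)
    (hY : Measurable Y) : entr μ (fun ω => (X ω, Y ω)) ≤ entr μ X + entr μ Y := by
  simpa using entr_prod_add_negMulLog_le (μ := μ) hX hY

lemma entr_prod_of_indepFun [IsProbabilityMeasure μ] {X : Ω → α} {Y : Ω → β}
    (hX : Measurable X) (hY : Measurable Y) (hXY : IndepFun X Y μ) :
    entr μ (fun ω => (X ω, Y ω)) = entr μ X + entr μ Y := by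
  have hmul : ∀ a b, μ.real (X ⁻¹' {a} ∩ Y ⁻¹' {b}) = μ.real (X ⁻¹' {a}) * μ.real (Y ⁻¹' {b}) :=
    fun a b => by
      rw [measureReal_def, hXY.measure_inter_preimage_eq_mul _ _ (measurableSet_singleton a)
        (measurableSet_singleton b), ENNReal.toReal_mul]
      rfl
  simp_rw [entr_prod_eq_sum hX hY, entr_eq_sum hX, entr_eq_sum hY, hmul, negMulLog_mul,
    Finset.sum_add_distrib, ← Finset.sum_mul, ← Finset.mul_sum, ← Finset.sum_mul,
    sum_measureReal_preimage_singleton_eq_one hX, sum_measureReal_preimage_singleton_eq_one hY,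
    one_mul]

lemma entr_le_log_card [IsProbabilityMeasure μ] {X : Ω → α} (hX : Measurable X) :
    entr μ X ≤ log (Fintype.card α) := by
  rcases isEmpty_or_nonempty α with hα | hα
  · simp [entr_eq_sum hX]
  have hN : (0 : ℝ) < Fintype.card α := by exact_mod_cast Fintype.card_pos
  have jensen := concaveOn_negMulLog.le_map_sum (t := Finset.univ)
    (w := fun _ => ((Fintype.card α : ℝ))⁻¹) (p := fun a => μ.real (X ⁻¹' {a}))
    (fun _ _ => by positivity) (by simp [hN.ne'])
    (fun _ _ => Set.mem_Ici.2 measureReal_nonneg)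
  simp only [smul_eq_mul, ← Finset.mul_sum, sum_measureReal_preimage_singleton_eq_one hX,
    mul_one, negMulLog, log_inv] at jensen
  rw [entr_eq_sum hX, ← mul_le_mul_iff_of_pos_left (inv_pos.2 hN)]
  simpa [negMulLog] using jensen

lemma entr_of_isUnif {X : Ω → α} (hX : Measurable X) (hu : IsUnif μ X) :
    entr μ X = log (Fintype.card α) := by
  have hp : ∀ a, μ.real (X ⁻¹' {a}) = ((Fintype.card α : ℝ))⁻¹ := fun a => by
    simp [measureReal_def, hu a]
  rcases isEmpty_or_nonempty α with hα | hα
  · simp [entr_eq_sum hX]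
  have hN : (0 : ℝ) < Fintype.card α := by exact_mod_cast Fintype.card_pos
  simp [entr_eq_sum hX, hp, negMulLog, hN.ne']

end Entropy

section Conditional

variable {Ω : Type*} [MeasurableSpace Ω] {μ : Measure Ω}
  {α β γ δ ε : Type*} [Fintype α] [MeasurableSpace α] [MeasurableSingletonClass α]
  [Fintype β] [MeasurableSpace β] [MeasurableSingletonClass β]
  [Fintype γ] [MeasurableSpace γ] [MeasurableSingletonClass γ]
  [Fintype δ] [MeasurableSpace δ] [MeasurableSingletonClass δ]
  [Fintype ε] [MeasurableSpace ε] [MeasurableSingletonClass ε]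
  {A : Ω → α} {B : Ω → β} {C : Ω → γ}

lemma entr_prod_comm (hA : Measurable A) (hB : Measurable B) :
    entr μ (fun ω => (A ω, B ω)) = entr μ (fun ω => (B ω, A ω)) :=
  (entr_comp_of_injective (hA.prodMk hB) Prod.swap_injective).symm

lemma entr_prod_assoc (hA : Measurable A) (hB : Measurable B) (hC : Measurable C) :
    entr μ (fun ω => ((A ω, B ω), C ω)) = entr μ (fun ω => (A ω, (B ω, C ω))) :=
  (entr_comp_of_injective ((hA.prodMk hB).prodMk hC) (Equiv.prodAssoc α β γ).injective).symm

lemma condEntr_nonneg [IsFiniteMeasure μ] (hA : Measurable A) (hB : Measurable B) :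
    0 ≤ condEntr μ A B :=
  sub_nonneg.2 (entr_le_entr_prod hA hB)

lemma condEntr_le_entr [IsProbabilityMeasure μ] (hA : Measurable A) (hB : Measurable B) :
    condEntr μ A B ≤ entr μ A := by
  rw [condEntr, entr_prod_comm hA hB]
  linarith [entr_prod_le_add (μ := μ) hB hA]

lemma condEntr_le_condEntr_comp [IsFiniteMeasure μ] (hA : Measurable A) (hB : Measurable B)
    (g : β → γ) : condEntr μ A B ≤ condEntr μ A (fun ω => g (B ω)) := by
  have hgB : Measurable fun ω => g (B ω) := Measurable.of_discrete.comp hB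
  have hAB : entr μ (fun ω => ((A ω, B ω), g (B ω))) = entr μ (fun ω => (A ω, B ω)) :=
    entr_comp_of_injective (hA.prodMk hB) (g := fun p => (p, g p.2))
      fun _ _ h => congrArg Prod.fst h
  have hB' : entr μ (fun ω => (B ω, g (B ω))) = entr μ B :=
    entr_comp_of_injective hB (g := fun b => (b, g b)) fun _ _ h => congrArg Prod.fst h
  have := entr_submodular (μ := μ) hA hB hgB
  rw [condEntr, condEntr]
  linarith

lemma condEntr_comp_le [IsFiniteMeasure μ] (hA : Measurable A) (hB : Measurable B)
    (g : α → β → γ) : condEntr μ (fun ω => g (A ω) (B ω)) B ≤ condEntr μ A B :=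
  sub_le_sub_right (entr_comp_le (hA.prodMk hB) fun p => (g p.1 p.2, p.2)) _

lemma entr_sub_condEntr_comm (hA : Measurable A) (hB : Measurable B) :
    entr μ A - condEntr μ A B = entr μ B - condEntr μ B A := by
  rw [condEntr, condEntr, entr_prod_comm hA hB]
  ring

lemma condMI_eq_condEntr_sub (hA : Measurable A) (hB : Measurable B) (hC : Measurable C) :
    condMI μ A B C = condEntr μ A C - condEntr μ A (fun ω => (B ω, C ω)) := by
  rw [condMI, condEntr, condEntr, condEntr, condEntr, entr_prod_assoc hA hB hC]
  ring

lemma condMI_comm (hA : Measurable A) (hB : Measurable B) (hC : Measurable C) :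
    condMI μ A B C = condMI μ B A C := by
  have hswap : entr μ (fun ω => ((A ω, B ω), C ω)) = entr μ (fun ω => ((B ω, A ω), C ω)) :=
    (entr_comp_of_injective ((hA.prodMk hB).prodMk hC)
      ((Equiv.prodComm α β).prodCongr (Equiv.refl γ)).injective).symm
  simp only [condMI, condEntr, hswap]
  ring

lemma condEntr_le_condEntr_add_condMI [IsFiniteMeasure μ] (hA : Measurable A)
    (hB : Measurable B) (hC : Measurable C) :
    condEntr μ A C ≤ condEntr μ A B + condMI μ A B C := by
  rw [condMI_eq_condEntr_sub hA hB hC]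
  linarith [condEntr_le_condEntr_comp (μ := μ) hA (hB.prodMk hC) Prod.fst]

lemma condMI_comp_left_le [IsFiniteMeasure μ] (hA : Measurable A) (hB : Measurable B)
    (hC : Measurable C) (g : α → δ) : condMI μ (fun ω => g (A ω)) B C ≤ condMI μ A B C := by
  have hgA : Measurable fun ω => g (A ω) := Measurable.of_discrete.comp hA
  rw [condMI_comm hgA hB hC, condMI_comm hA hB hC, condMI_eq_condEntr_sub hB hgA hC,
    condMI_eq_condEntr_sub hB hA hC]
  linarith [condEntr_le_condEntr_comp (μ := μ) hB (hA.prodMk hC) fun p => (g p.1, p.2)]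

lemma condMI_comp_le [IsFiniteMeasure μ] (hA : Measurable A) (hB : Measurable B)
    (hC : Measurable C) (g : α → δ) (h : β → ε) :
    condMI μ (fun ω => g (A ω)) (fun ω => h (B ω)) C ≤ condMI μ A B C := by
  have hgA : Measurable fun ω => g (A ω) := Measurable.of_discrete.comp hA
  calc condMI μ (fun ω => g (A ω)) (fun ω => h (B ω)) C
      = condMI μ (fun ω => h (B ω)) (fun ω => g (A ω)) C :=
        condMI_comm hgA (Measurable.of_discrete.comp hB) hC
    _ ≤ condMI μ B (fun ω => g (A ω)) C := condMI_comp_left_le hB hgA hC h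
    _ = condMI μ (fun ω => g (A ω)) B C := condMI_comm hB hgA hC
    _ ≤ condMI μ A B C := condMI_comp_left_le hA hB hC g

lemma condEntr_comp_right_of_injective (hA : Measurable A) (hB : Measurable B) {g : β → γ}
    (hg : Function.Injective g) : condEntr μ A (fun ω => g (B ω)) = condEntr μ A B := by
  have hAB : entr μ (fun ω => (A ω, g (B ω))) = entr μ (fun ω => (A ω, B ω)) :=
    entr_comp_of_injective (hA.prodMk hB) (g := fun p => (p.1, g p.2))
      fun _ _ h => Prod.ext (Prod.ext_iff.1 h).1 (hg (Prod.ext_iff.1 h).2)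
  rw [condEntr, condEntr, hAB, entr_comp_of_injective hB hg]

lemma condMI_comp_right_of_injective (hA : Measurable A) (hB : Measurable B)
    (hC : Measurable C) {g : γ → δ} (hg : Function.Injective g) :
    condMI μ A B (fun ω => g (C ω)) = condMI μ A B C := by
  rw [condMI, condMI, condEntr_comp_right_of_injective hA hC hg,
    condEntr_comp_right_of_injective hB hC hg,
    condEntr_comp_right_of_injective (hA.prodMk hB) hC hg]

lemma condMI_prodMk_of_unique [Unique δ] (hA : Measurable A) (hB : Measurable B)
    (hC : Measurable C) (D : Ω → δ) :
    condMI μ A B (fun ω => (C ω, D ω)) = condMI μ A B C := by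
  rw [show (fun ω => (C ω, D ω)) = fun ω => (C ω, default) from
    funext fun ω => by rw [Unique.eq_default (D ω)]]
  exact condMI_comp_right_of_injective hA hB hC (g := fun c => (c, default))
    fun _ _ h => (Prod.ext_iff.1 h).1

end Conditional

lemma eq_sum_sub_sum_subtype_ne {ι M : Type*} [Fintype ι] [DecidableEq ι] [AddCommGroup M]
    (f : ι → M) (j : ι) : f j = ∑ k, f k - ∑ k : {k // k ≠ j}, f k :=
  eq_sub_of_add_eq (Fintype.sum_eq_add_sum_subtype_ne f j).symm

lemma measurable_message {Ω ι α β γ : Type*} [MeasurableSpace Ω] [MeasurableSpace α]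
    [MeasurableSpace β] [MeasurableSpace γ] [DiscreteMeasurableSpace (α × β)]
    {W : ι → Ω → α} {Z : ι → Ω → β} {X : ι → Ω → γ} {f : ι → α → β → γ}
    (hW : ∀ k, Measurable (W k)) (hZ : ∀ k, Measurable (Z k))
    (hX : ∀ k, X k = fun ω => f k (W k ω) (Z k ω)) (k : ι) : Measurable (X k) := by
  rw [hX k]
  exact Measurable.of_discrete.comp (g := fun p => f k p.1 p.2) ((hW k).prodMk (hZ k))

section SecureSummation

variable {Ω : Type*} [MeasurableSpace Ω] {μ : Measure Ω} [IsProbabilityMeasure μ]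
  {ι : Type*} [Fintype ι] [DecidableEq ι]
  {α β : Type*} [Fintype α] [MeasurableSpace α] [MeasurableSingletonClass α]
  [Fintype β] [MeasurableSpace β] [MeasurableSingletonClass β]

lemma entr_le_condEntr_of_iIndepFun {W : ι → Ω → α} {V : Ω → β} (hW : ∀ k, Measurable (W k))
    (hV : Measurable V) (hindep : iIndepFun W μ) (hWV : IndepFun (fun ω k => W k ω) V μ)
    (j : ι) :
    entr μ (W j) ≤ condEntr μ (W j) (fun ω => ((fun k : {k // k ≠ j} => W k ω), V ω)) := by
  set R : Ω → {k // k ≠ j} → α := fun ω k => W k ω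
  have hR : Measurable R := measurable_pi_lambda _ fun k => hW k
  have hWv : Measurable fun ω k => W k ω := measurable_pi_lambda _ hW
  have hjR : IndepFun (W j) R μ :=
    (hindep.indepFun_finset {j} (Finset.univ.erase j) (by simp) hW).comp
      (φ := fun (v : ↥({j} : Finset ι) → α) => v ⟨j, Finset.mem_singleton_self j⟩)
      (ψ := fun (v : ↥(Finset.univ.erase j) → α) (k : {k // k ≠ j}) =>
        v ⟨k, Finset.mem_erase.2 ⟨k.2, Finset.mem_univ _⟩⟩)
      Measurable.of_discrete Measurable.of_discrete
  set e : (ι → α) → α × ({k // k ≠ j} → α) := fun v => (v j, fun k => v k)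
  have he : Function.Injective e := fun v v' h => funext fun k => by
    by_cases hk : k = j
    · exact hk ▸ (Prod.ext_iff.1 h).1
    · exact congrFun (Prod.ext_iff.1 h).2 ⟨k, hk⟩
  have hsplit : entr μ (fun ω => (W j ω, R ω)) = entr μ (fun ω k => W k ω) :=
    entr_comp_of_injective hWv he
  have hsplitV : entr μ (fun ω => ((W j ω, R ω), V ω))
      = entr μ (fun ω => ((fun k => W k ω), V ω)) :=
    entr_comp_of_injective (hWv.prodMk hV) (g := fun p => (e p.1, p.2))
      fun _ _ h => Prod.ext (he (Prod.ext_iff.1 h).1) (Prod.ext_iff.1 h).2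
  rw [condEntr, ← entr_prod_assoc (hW j) hR hV]
  -- `H(W_j, R, V) = H(W_j) + H(R) + H(V)` while `H(R, V) ≤ H(R) + H(V)`
  linarith [entr_prod_of_indepFun (hW j) hR hjR, entr_prod_of_indepFun hWv hV hWV,
    entr_prod_le_add (μ := μ) hR hV]

variable {G ζ ξ : Type*} [AddCommGroup G] [Fintype G] [MeasurableSpace G]
  [MeasurableSingletonClass G] [Fintype ζ] [MeasurableSpace ζ] [MeasurableSingletonClass ζ]
  [Fintype ξ] [MeasurableSpace ξ] [MeasurableSingletonClass ξ]
  {W : ι → Ω → G} {Z : ι → Ω → ζ} {X : ι → Ω → ξ} {f : ι → G → ζ → ξ}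

lemma entr_message_le_condEntr_sum (hW : ∀ k, Measurable (W k)) (hZ : ∀ k, Measurable (Z k))
    (hX : ∀ k, X k = fun ω => f k (W k ω) (Z k ω)) {u j : ι} (hju : j ≠ u)
    (hunif : IsUnif μ (W j)) (hindep : iIndepFun W μ)
    (hWZ : IndepFun (fun ω k => W k ω) (fun ω k => Z k ω) μ) :
    entr μ (X u) ≤ condEntr μ (X u) (fun ω => ∑ k, W k ω) := by
  set S : Ω → G := fun ω => ∑ k, W k ω
  set C : Ω → ({k // k ≠ j} → G) × (ι → ζ) := fun ω => ((fun k => W k ω), fun k => Z k ω)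
  have hS : Measurable S := Finset.measurable_sum _ fun k _ => hW k
  have hC : Measurable C :=
    (measurable_pi_lambda _ fun k : {k // k ≠ j} => hW k).prodMk (measurable_pi_lambda _ hZ)
  have hWj : log (Fintype.card G) ≤ condEntr μ (W j) C := entr_of_isUnif (hW j) hunif ▸
    entr_le_condEntr_of_iIndepFun hW (measurable_pi_lambda _ hZ) hindep hWZ j
  have hWS : condEntr μ (W j) C ≤ condEntr μ S C := by
    rw [funext fun ω => eq_sum_sub_sum_subtype_ne (W · ω) j]
    exact condEntr_comp_le hS hC fun s c => s - ∑ k, c.1 k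
  have hSX : condEntr μ S C ≤ condEntr μ S (X u) := by
    rw [hX u]
    exact condEntr_le_condEntr_comp hS hC fun c => f u (c.1 ⟨u, hju.symm⟩) (c.2 u)
  -- `I(X_u; S) = H(S) - H(S | X_u) ≤ log |G| - log |G|`
  linarith [entr_le_log_card (μ := μ) hS,
    entr_sub_condEntr_comm (μ := μ) (measurable_message hW hZ hX u) hS]

lemma log_card_le_entr_message (hW : ∀ k, Measurable (W k)) (hZ : ∀ k, Measurable (Z k))
    (hX : ∀ k, X k = fun ω => f k (W k ω) (Z k ω)) (u : ι) (hunif : IsUnif μ (W u))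
    (hindep : iIndepFun W μ) (hWZ : IndepFun (fun ω k => W k ω) (fun ω k => Z k ω) μ)
    (hcorrect : condEntr μ (fun ω => ∑ k, W k ω) (fun ω k => X k ω) = 0) :
    log (Fintype.card G) ≤ entr μ (X u) := by
  set S : Ω → G := fun ω => ∑ k, W k ω
  set C : Ω → ({k // k ≠ u} → G) × (ι → ζ) := fun ω => ((fun k => W k ω), fun k => Z k ω)
  have hS : Measurable S := Finset.measurable_sum _ fun k _ => hW k
  have hC : Measurable C :=
    (measurable_pi_lambda _ fun k : {k // k ≠ u} => hW k).prodMk (measurable_pi_lambda _ hZ)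
  have hXu := measurable_message hW hZ hX u
  have hWu : log (Fintype.card G) ≤ condEntr μ (W u) C := entr_of_isUnif (hW u) hunif ▸
    entr_le_condEntr_of_iIndepFun hW (measurable_pi_lambda _ hZ) hindep hWZ u
  have hWS : condEntr μ (W u) (fun ω => (X u ω, C ω))
      ≤ condEntr μ S (fun ω => (X u ω, C ω)) := by
    rw [funext fun ω => eq_sum_sub_sum_subtype_ne (W · ω) u]
    exact condEntr_comp_le hS (hXu.prodMk hC) fun s p => s - ∑ k, p.2.1 k
  -- all messages are recovered from `X u` and the data `C` of the other users
  have hSX : condEntr μ S (fun ω => (X u ω, C ω)) ≤ 0 := by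
    have hXv : (fun ω k => X k ω) = fun ω k =>
        if h : k = u then X u ω else f k ((C ω).1 ⟨k, h⟩) ((C ω).2 k) := by
      funext ω k
      by_cases h : k = u
      · subst h; simp
      · simp [h, hX k, C]
    have := condEntr_le_condEntr_comp (μ := μ) hS (hXu.prodMk hC) fun p k =>
      if h : k = u then p.1 else f k (p.2.1 ⟨k, h⟩) (p.2.2 k)
    rwa [← hXv, hcorrect] at this
  -- `I(W_u; X_u | C)` is at least `log |G|` and at most `H(X_u)`
  have hMI := condMI_comm (μ := μ) (hW u) hXu hC
  rw [condMI_eq_condEntr_sub (hW u) hXu hC, condMI_eq_condEntr_sub hXu (hW u) hC] at hMI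
  linarith [condEntr_nonneg (μ := μ) hXu ((hW u).prodMk hC), condEntr_le_entr (μ := μ) hXu hC]

theorem log_card_le_entr_key [Nontrivial ι] (hW : ∀ k, Measurable (W k))
    (hZ : ∀ k, Measurable (Z k)) (hX : ∀ k, X k = fun ω => f k (W k ω) (Z k ω))
    (hunif : ∀ k, IsUnif μ (W k)) (hindep : iIndepFun W μ)
    (hWZ : IndepFun (fun ω k => W k ω) (fun ω k => Z k ω) μ)
    (hcorrect : condEntr μ (fun ω => ∑ k, W k ω) (fun ω k => X k ω) = 0)
    (hsecure : condMI μ (fun ω k => W k ω) (fun ω k => X k ω) (fun ω => ∑ k, W k ω) = 0)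
    (u : ι) : log (Fintype.card G) ≤ entr μ (Z u) := by
  obtain ⟨j, hju⟩ := exists_ne u
  have hS : Measurable fun ω => ∑ k, W k ω := Finset.measurable_sum _ fun k _ => hW k
  have hXu := measurable_message hW hZ hX u
  have hleak : condMI μ (X u) (W u) (fun ω => ∑ k, W k ω) ≤ 0 := by
    have hWv : Measurable fun ω k => W k ω := measurable_pi_lambda _ hW
    have hXv : Measurable fun ω k => X k ω :=
      measurable_pi_lambda _ (measurable_message hW hZ hX)
    rw [← hsecure, condMI_comm hWv hXv hS]
    exact condMI_comp_le hXv hWv hS (fun x => x u) (fun w => w u)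
  calc log (Fintype.card G) ≤ entr μ (X u) :=
        log_card_le_entr_message hW hZ hX u (hunif u) hindep hWZ hcorrect
    _ ≤ condEntr μ (X u) (fun ω => ∑ k, W k ω) :=
        entr_message_le_condEntr_sum hW hZ hX hju (hunif j) hindep hWZ
    _ ≤ condEntr μ (X u) (W u) := by
        linarith [condEntr_le_condEntr_add_condMI (μ := μ) hXu (hW u) hS]
    _ ≤ condEntr μ (Z u) (W u) := by
        rw [hX u]
        exact condEntr_comp_le (hZ u) (hW u) fun z w => f u w z
    _ ≤ entr μ (Z u) := condEntr_le_entr (hZ u) (hW u)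

end SecureSummation

lemma log_card_fin_fun_zmod (q n : ℕ) [NeZero q] :
    log (Fintype.card (Fin n → ZMod q)) = n * log q := by
  simp [ZMod.card]

theorem stmt5_general
    (q K L LX LZ : ℕ) [NeZero q] (hq : IsPrimePow q) (hK : 2 ≤ K)
    {Ω : Type*} [MeasurableSpace Ω] (μ : Measure Ω) [IsProbabilityMeasure μ]
    (W : Fin K → Ω → (Fin L → ZMod q))
    (Z : Fin K → Ω → (Fin LZ → ZMod q))
    (X : Fin K → Ω → (Fin LX → ZMod q))
    (hWmeas : ∀ k, Measurable (W k)) (hZmeas : ∀ k, Measurable (Z k))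
    (hWunif : ∀ k, IsUnif μ (W k))
    (hWindep : iIndepFun W μ)
    (hWZindep : IndepFun (fun ω => fun k => W k ω) (fun ω => fun k => Z k ω) μ)
    (f : Fin K → (Fin L → ZMod q) → (Fin LZ → ZMod q) → (Fin LX → ZMod q))
    (hX : ∀ k, X k = fun ω => f k (W k ω) (Z k ω))
    (hCorrect : condEntr μ (fun ω => ∑ k, W k ω) (fun ω => fun k => X k ω) = 0)
    (hSecEmpty : condMI μ (fun ω => fun k => W k ω) (fun ω => fun k => X k ω)
      (fun ω => (∑ k, W k ω,
        fun k : {k : Fin K // k ∈ (∅ : Finset (Fin K))} => (W k.1 ω, Z k.1 ω))) = 0) :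
    (∀ u : Fin K, entr μ (Z u) ≥ L * Real.log q) ∧ L ≤ LZ := by
  have : Nontrivial (Fin K) := Fin.nontrivial_iff_two_le.2 hK
  have hSec : condMI μ (fun ω k => W k ω) (fun ω k => X k ω) (fun ω => ∑ k, W k ω) = 0 :=
    (condMI_prodMk_of_unique (measurable_pi_lambda _ hWmeas)
      (measurable_pi_lambda _ (measurable_message hWmeas hZmeas hX))
      (Finset.measurable_sum _ fun k _ => hWmeas k) _).symm.trans hSecEmpty
  have hkey : ∀ u, L * log q ≤ entr μ (Z u) := fun u => by
    simpa [log_card_fin_fun_zmod] using log_card_le_entr_key hWmeas hZmeas hX hWunif hWindep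
      hWZindep hCorrect hSec u
  refine ⟨hkey, ?_⟩
  have hZ0 := (hkey ⟨0, by omega⟩).trans (entr_le_log_card (μ := μ) (hZmeas _))
  rw [log_card_fin_fun_zmod] at hZ0
  exact_mod_cast le_of_mul_le_mul_right hZ0 (log_pos (by exact_mod_cast hq.two_le))

/-- in the secure summation model where each key `Z_k` takes values in
`(ZMod q)^{L_Z}`, with correctness and security against the empty colluding set, every
user's key satisfies `H(Z_u) ≥ L·log q`; consequently `L_Z ≥ L` (key rate `R_Z ≥ 1`). -/
theorem stmt5
    (q K L LX LZ : ℕ) [NeZero q] (hq : IsPrimePow q) (hK : 2 ≤ K) (hL : 1 ≤ L)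
    (hLX : 1 ≤ LX) (hLZ : 1 ≤ LZ)
    {Ω : Type*} [MeasurableSpace Ω] (μ : Measure Ω) [IsProbabilityMeasure μ]
    (W : Fin K → Ω → (Fin L → ZMod q))
    (Z : Fin K → Ω → (Fin LZ → ZMod q))
    (X : Fin K → Ω → (Fin LX → ZMod q))
    (hWmeas : ∀ k, Measurable (W k)) (hZmeas : ∀ k, Measurable (Z k))
    (hWunif : ∀ k, IsUnif μ (W k))
    (hWindep : iIndepFun W μ)
    (hWZindep : IndepFun (fun ω => fun k => W k ω) (fun ω => fun k => Z k ω) μ)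
    (f : Fin K → (Fin L → ZMod q) → (Fin LZ → ZMod q) → (Fin LX → ZMod q))
    (hX : ∀ k, X k = fun ω => f k (W k ω) (Z k ω))
    (hXmeas : ∀ k, Measurable (X k))
    (hCorrect : condEntr μ (fun ω => ∑ k, W k ω) (fun ω => fun k => X k ω) = 0)
    (hSecEmpty : condMI μ (fun ω => fun k => W k ω) (fun ω => fun k => X k ω)
      (fun ω => (∑ k, W k ω,
        fun k : {k : Fin K // k ∈ (∅ : Finset (Fin K))} => (W k.1 ω, Z k.1 ω))) = 0) :
    (∀ u : Fin K, entr μ (Z u) ≥ L * Real.log q) ∧ L ≤ LZ :=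
  stmt5_general q K L LX LZ hq hK μ W Z X hWmeas hZmeas hWunif hWindep hWZindep f hX hCorrect
    hSecEmpty
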